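/- Let G₁ and G₂ be groups and let f : G₁ → G₂ be a map satisfying f(a²ba⁻¹) = f(a)²·f(b)·f(a)⁻¹ for all a,b ∈ G₁. Then f(aba⁻¹) = f(a)·f(ba)·f(a)⁻² for all a,b ∈ G₁. -/

import Mathlib

/-! Specialising the hypothesis to `b = 1` and `b = a⁻¹` shows that `f` preserves `1` and
inverses. Since `a² (b a)⁻¹ a⁻¹ = (a b a⁻¹)⁻¹`, specialising it to `(b a)⁻¹` and inverting both
sides gives the identity. -/

section GyroHom

variable {G₁ G₂ : Type*} [Group G₁] [Group G₂] {f : G₁ → G₂}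

theorem map_one_of_map_gyro (hf : ∀ a b : G₁, f (a ^ 2 * b * a⁻¹) = f a ^ 2 * f b * (f a)⁻¹) :
    f 1 = 1 := by
  have h := hf 1 1
  simp only [mul_one, inv_one, pow_two, mul_inv_cancel_right] at h
  exact left_eq_mul.mp h

theorem map_inv_of_map_gyro (hf : ∀ a b : G₁, f (a ^ 2 * b * a⁻¹) = f a ^ 2 * f b * (f a)⁻¹)
    (x : G₁) : f x⁻¹ = (f x)⁻¹ := by
  have h := hf x x⁻¹
  rw [show x ^ 2 * x⁻¹ * x⁻¹ = 1 by group, map_one_of_map_gyro hf] at h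
  calc f x⁻¹ = (f x ^ 2)⁻¹ * (f x ^ 2 * f x⁻¹ * (f x)⁻¹) * f x := by group
    _ = (f x)⁻¹ := by rw [← h]; group

end GyroHom

/-- A map preserving the gyrogroup operation `a ⊙ b = a² b a⁻¹` satisfies
`f (a b a⁻¹) = f a · f (b a) · (f a)⁻²`. -/
theorem gyro_hom_eq_3 (G₁ G₂ : Type*) [Group G₁] [Group G₂] (f : G₁ → G₂)
    (hf : ∀ a b : G₁, f (a ^ 2 * b * a⁻¹) = (f a) ^ 2 * f b * (f a)⁻¹) :
    ∀ a b : G₁, f (a * b * a⁻¹) = f a * f (b * a) * ((f a) ^ 2)⁻¹ := by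
  intro a b
  have h := hf a (b * a)⁻¹
  rw [show a ^ 2 * (b * a)⁻¹ * a⁻¹ = (a * b * a⁻¹)⁻¹ by group,
    map_inv_of_map_gyro hf, map_inv_of_map_gyro hf] at h
  rw [← inv_inv (f (a * b * a⁻¹)), h]
  group
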